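/- Consider a Richman game in which Player 1's target v_R is reachable from every vertex and Player 2's target v_S is reachable from no vertex. Then the threshold budget of every vertex is 0: from every vertex and with every strictly positive initial budget, Player 1 has a strategy that forces the outcome to reach v_R; moreover, Player 1 can force the outcome to reach v_R while still holding a strictly positive budget upon arrival. -/

import Mathlib

open scoped Classical

/-! ### Bidding games: the basic model -/

/-- One round of a bidding game: the vertex the token was moved to, the winning bid,
and whether Player 1 won the bidding. -/
structure BidRound (V : Type) where
  dest : V
  bid : ℝ
  p1Won : Bool

/-- A history: the initial vertex together with the list of rounds played so far. -/
structure Hist (V : Type) where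
  init : V
  rounds : List (BidRound V)

/-- The vertex currently occupied by the token. -/
def Hist.cur {V : Type} (h : Hist V) : V :=
  h.rounds.getLast?.elim h.init BidRound.dest

/-- The net payment of Player 1 so far (bids paid upon winning minus bids received). -/
def Hist.pay1 {V : Type} (h : Hist V) : ℝ :=
  (h.rounds.map (fun r => if r.p1Won then r.bid else -r.bid)).sum

/-- The net payment of Player 2 so far. -/
def Hist.pay2 {V : Type} (h : Hist V) : ℝ := -h.pay1

/-- The sum of the weights of all vertices visited so far (including the current one). -/
def Hist.energyAll {V : Type} (w : V → ℤ) (h : Hist V) : ℤ :=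
  w h.init + (h.rounds.map (fun r => w r.dest)).sum

/-- A strategy: maps a history to a bid and the vertex to move to upon winning. -/
def Strat (V : Type) := Hist V → ℝ × V

/-- A tie-breaking mechanism: decides at each history whether Player 1 wins a tie. -/
def TieBreak (V : Type) := Hist V → Bool

/-- A bidding game: a finite directed graph in which every vertex has an outgoing edge. -/
structure BiddingGame (V : Type) [Fintype V] where
  E : V → V → Prop
  total : ∀ v, ∃ u, E v u

/-- One round of play: both players bid; the higher bidder (Player 1 upon a tie won by
the tie-breaking mechanism) pays his bid to the other player and moves the token. -/
noncomputable def extend {V : Type} (tb : TieBreak V) (f1 f2 : Strat V) (h : Hist V) : Hist V :=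
  if (f2 h).1 < (f1 h).1 ∨ ((f1 h).1 = (f2 h).1 ∧ tb h = true) then
    ⟨h.init, h.rounds ++ [⟨(f1 h).2, (f1 h).1, true⟩]⟩
  else
    ⟨h.init, h.rounds ++ [⟨(f2 h).2, (f2 h).1, false⟩]⟩

/-- The history after `n` rounds, starting at `v0`. -/
noncomputable def play {V : Type} (tb : TieBreak V) (f1 f2 : Strat V) (v0 : V) : ℕ → Hist V
  | 0 => ⟨v0, []⟩
  | n + 1 => extend tb f1 f2 (play tb f1 f2 v0 n)

/-- The vertex occupied after `n` rounds. -/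
noncomputable def visit {V : Type} (tb : TieBreak V) (f1 f2 : Strat V) (v0 : V) (n : ℕ) : V :=
  (play tb f1 f2 v0 n).cur

/-- The energy (sum of weights) of the prefix of length `n` of the outcome. -/
noncomputable def energy {V : Type} (w : V → ℤ) (tb : TieBreak V) (f1 f2 : Strat V) (v0 : V)
    (n : ℕ) : ℤ :=
  ∑ i ∈ Finset.range n, w (visit tb f1 f2 v0 i)

/-- Player 1's strategy is legal w.r.t. the initial budget `B`: along any play, his bids
are nonnegative, never exceed his current budget, and his moves follow edges. -/
def Legal1 {V : Type} [Fintype V] (G : BiddingGame V) (f1 : Strat V) (B : ℝ) : Prop :=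
  ∀ (tb : TieBreak V) (f2 : Strat V) (v0 : V) (n : ℕ),
    0 ≤ (f1 (play tb f1 f2 v0 n)).1 ∧
    (f1 (play tb f1 f2 v0 n)).1 ≤ B - (play tb f1 f2 v0 n).pay1 ∧
    G.E (play tb f1 f2 v0 n).cur (f1 (play tb f1 f2 v0 n)).2

/-- Player 2's strategy is legal w.r.t. the initial budget `B`. -/
def Legal2 {V : Type} [Fintype V] (G : BiddingGame V) (f2 : Strat V) (B : ℝ) : Prop :=
  ∀ (tb : TieBreak V) (f1 : Strat V) (v0 : V) (n : ℕ),
    0 ≤ (f2 (play tb f1 f2 v0 n)).1 ∧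
    (f2 (play tb f1 f2 v0 n)).1 ≤ B - (play tb f1 f2 v0 n).pay2 ∧
    G.E (play tb f1 f2 v0 n).cur (f2 (play tb f1 f2 v0 n)).2

/-- A memoryless strategy: its action depends only on the current vertex and the
player's current budget (equivalently, the net payments so far). -/
def Memoryless {V : Type} (f : Strat V) : Prop :=
  ∀ h h' : Hist V, h.cur = h'.cur → h.pay1 = h'.pay1 → f h = f h'

/-- A memoryless strategy in a mean-payoff game: its action depends only on the current
vertex, the player's current budget, and the current energy level. -/
def MemorylessE {V : Type} (w : V → ℤ) (f : Strat V) : Prop :=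
  ∀ h h' : Hist V, h.cur = h'.cur → h.pay1 = h'.pay1 →
    h.energyAll w = h'.energyAll w → f h = f h'

/-- A constant-memory strategy for Player 2 (Max): the action depends only on the current
vertex, Player 2's current budget, the current energy level, and a memory state ranging
over a finite set (of size independent of the history), updated round by round. -/
def FiniteMemory2 {V : Type} (w : V → ℤ) (f : Strat V) (B : ℝ) : Prop :=
  ∃ (M : Type) (_ : Fintype M) (m0 : M) (upd : M → BidRound V → M)
    (act : V → ℝ → ℤ → M → ℝ × V),
    ∀ h : Hist V, f h = act h.cur (B - h.pay2) (h.energyAll w) (h.rounds.foldl upd m0)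

/-- Strong connectivity of the arena. -/
def StronglyConnected {V : Type} [Fintype V] (G : BiddingGame V) : Prop :=
  ∀ v u : V, Relation.ReflTransGen G.E v u

/-! ### Richman games -/

/-- The successors of `v`. -/
noncomputable def BiddingGame.adj {V : Type} [Fintype V] (G : BiddingGame V) (v : V) :
    Finset V :=
  Finset.univ.filter (fun u => G.E v u)

lemma BiddingGame.adj_nonempty {V : Type} [Fintype V] (G : BiddingGame V) (v : V) :
    (G.adj v).Nonempty := by
  obtain ⟨u, hu⟩ := G.total v
  exact ⟨u, by simpa [BiddingGame.adj] using hu⟩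

/-- The Richman function `R(v, i)`. -/
noncomputable def Rfun {V : Type} [Fintype V] (G : BiddingGame V) (vR vS : V) :
    ℕ → V → ℝ
  | 0, v => if v = vR then 0 else 1
  | i + 1, v =>
      if v = vR then 0
      else if v = vS then 1
      else ((G.adj v).sup' (G.adj_nonempty v) (Rfun G vR vS i) +
            (G.adj v).inf' (G.adj_nonempty v) (Rfun G vR vS i)) / 2

/-- The limit Richman function `R(v) = lim_i R(v, i)`; since `i ↦ R(v, i)` is
nonincreasing, the limit equals the infimum. -/
noncomputable def Rlim {V : Type} [Fintype V] (G : BiddingGame V) (vR vS : V)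
    (v : V) : ℝ :=
  ⨅ i : ℕ, Rfun G vR vS i v

/-- Player 1 wins an outcome of a Richman game: `vR` is reached, and `vS` is not
reached before that (the game ends once a target is reached). -/
def Win1Richman {V : Type} (tb : TieBreak V) (f1 f2 : Strat V) (v0 vR vS : V) : Prop :=
  ∃ n, visit tb f1 f2 v0 n = vR ∧ ∀ m < n, visit tb f1 f2 v0 m ≠ vS

/-- Player 2 wins an outcome of a Richman game: `vS` is reached first, or no target is
ever reached. -/
def Win2Richman {V : Type} (tb : TieBreak V) (f1 f2 : Strat V) (v0 vR vS : V) : Prop :=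
  (∃ n, visit tb f1 f2 v0 n = vS ∧ ∀ m < n, visit tb f1 f2 v0 m ≠ vR) ∨
  (∀ n, visit tb f1 f2 v0 n ≠ vR ∧ visit tb f1 f2 v0 n ≠ vS)

/-- Player 1 has a winning strategy in the Richman game from `v0` with budget `B`. -/
def Win1RichmanFrom {V : Type} [Fintype V] (G : BiddingGame V) (vR vS v0 : V)
    (B : ℝ) : Prop :=
  ∀ tb : TieBreak V, ∃ f1 : Strat V, Legal1 G f1 B ∧
    ∀ f2 : Strat V, Legal2 G f2 (1 - B) → Win1Richman tb f1 f2 v0 vR vS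

/-- Player 2 has a winning strategy in the Richman game from `v0` with budget `B`. -/
def Win2RichmanFrom {V : Type} [Fintype V] (G : BiddingGame V) (vR vS v0 : V)
    (B : ℝ) : Prop :=
  ∀ tb : TieBreak V, ∃ f2 : Strat V, Legal2 G f2 B ∧
    ∀ f1 : Strat V, Legal1 G f1 (1 - B) → Win2Richman tb f1 f2 v0 vR vS

/-- `t` is a threshold budget at `v` in the Richman game. -/
def IsThreshRichman {V : Type} [Fintype V] (G : BiddingGame V) (vR vS v : V)
    (t : ℝ) : Prop :=
  (∀ B : ℝ, B ≤ 1 → t < B → Win1RichmanFrom G vR vS v B) ∧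
  (∀ B : ℝ, B ≤ 1 → 1 - t < B → Win2RichmanFrom G vR vS v B)

/-! ### Richman games with target sets -/

def Win1RichmanSet {V : Type} (tb : TieBreak V) (f1 f2 : Strat V) (v0 : V)
    (R S : Set V) : Prop :=
  ∃ n, visit tb f1 f2 v0 n ∈ R ∧ ∀ m < n, visit tb f1 f2 v0 m ∉ S

def Win2RichmanSet {V : Type} (tb : TieBreak V) (f1 f2 : Strat V) (v0 : V)
    (R S : Set V) : Prop :=
  (∃ n, visit tb f1 f2 v0 n ∈ S ∧ ∀ m < n, visit tb f1 f2 v0 m ∉ R) ∨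
  (∀ n, visit tb f1 f2 v0 n ∉ R ∧ visit tb f1 f2 v0 n ∉ S)

/-- `t` is a threshold budget at `v` in the Richman game with target sets `R` and `S`. -/
def IsThreshRichmanSet {V : Type} [Fintype V] (G : BiddingGame V) (R S : Set V)
    (v : V) (t : ℝ) : Prop :=
  (∀ B : ℝ, B ≤ 1 → t < B → ∀ tb : TieBreak V, ∃ f1 : Strat V, Legal1 G f1 B ∧
      ∀ f2 : Strat V, Legal2 G f2 (1 - B) → Win1RichmanSet tb f1 f2 v R S) ∧
  (∀ B : ℝ, B ≤ 1 → 1 - t < B → ∀ tb : TieBreak V, ∃ f2 : Strat V, Legal2 G f2 B ∧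
      ∀ f1 : Strat V, Legal1 G f1 (1 - B) → Win2RichmanSet tb f1 f2 v R S)

/-! ### Reachability games -/

/-- `t` is a threshold budget at `v` in the reachability game with target set `T`. -/
def IsThreshReach {V : Type} [Fintype V] (G : BiddingGame V) (T : Set V) (v : V)
    (t : ℝ) : Prop :=
  (∀ B : ℝ, B ≤ 1 → t < B → ∀ tb : TieBreak V, ∃ f1 : Strat V, Legal1 G f1 B ∧
      ∀ f2 : Strat V, Legal2 G f2 (1 - B) → ∃ n, visit tb f1 f2 v n ∈ T) ∧
  (∀ B : ℝ, B ≤ 1 → 1 - t < B → ∀ tb : TieBreak V, ∃ f2 : Strat V, Legal2 G f2 B ∧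
      ∀ f1 : Strat V, Legal1 G f1 (1 - B) → ∀ n, visit tb f1 f2 v n ∉ T)

/-! ### Parity games -/

/-- Player 1 wins an outcome of a parity game: the maximal parity index visited
infinitely often is odd. -/
def Win1Parity {V : Type} (p : V → ℕ) (tb : TieBreak V) (f1 f2 : Strat V)
    (v0 : V) : Prop :=
  Odd (sSup {k : ℕ | ∀ N : ℕ, ∃ n ≥ N, p (visit tb f1 f2 v0 n) = k})

def Win1ParityFrom {V : Type} [Fintype V] (G : BiddingGame V) (p : V → ℕ) (v0 : V)
    (B : ℝ) : Prop :=
  ∀ tb : TieBreak V, ∃ f1 : Strat V, Legal1 G f1 B ∧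
    ∀ f2 : Strat V, Legal2 G f2 (1 - B) → Win1Parity p tb f1 f2 v0

def Win2ParityFrom {V : Type} [Fintype V] (G : BiddingGame V) (p : V → ℕ) (v0 : V)
    (B : ℝ) : Prop :=
  ∀ tb : TieBreak V, ∃ f2 : Strat V, Legal2 G f2 B ∧
    ∀ f1 : Strat V, Legal1 G f1 (1 - B) → ¬ Win1Parity p tb f1 f2 v0

/-- `t` is a threshold budget at `v` in the parity game. -/
def IsThreshParity {V : Type} [Fintype V] (G : BiddingGame V) (p : V → ℕ) (v : V)
    (t : ℝ) : Prop :=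
  (∀ B : ℝ, B ≤ 1 → t < B → Win1ParityFrom G p v B) ∧
  (∀ B : ℝ, B ≤ 1 → 1 - t < B → Win2ParityFrom G p v B)

/-! ### Mean-payoff games (Min is Player 1, Max is Player 2) -/

/-- The mean-payoff value of the outcome. -/
noncomputable def mpval {V : Type} (w : V → ℤ) (tb : TieBreak V) (f1 f2 : Strat V)
    (v0 : V) : ℝ :=
  Filter.liminf (fun n : ℕ => (energy w tb f1 f2 v0 n : ℝ) / n) Filter.atTop

/-- Min can guarantee a nonpositive mean-payoff value from `v0` with budget `B`. -/
def MinWinsFrom {V : Type} [Fintype V] (G : BiddingGame V) (w : V → ℤ) (v0 : V)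
    (B : ℝ) : Prop :=
  ∀ tb : TieBreak V, ∃ f1 : Strat V, Legal1 G f1 B ∧
    ∀ f2 : Strat V, Legal2 G f2 (1 - B) → mpval w tb f1 f2 v0 ≤ 0

/-- Max can guarantee a strictly positive mean-payoff value from `v0` with budget `B`. -/
def MaxWinsFrom {V : Type} [Fintype V] (G : BiddingGame V) (w : V → ℤ) (v0 : V)
    (B : ℝ) : Prop :=
  ∀ tb : TieBreak V, ∃ f2 : Strat V, Legal2 G f2 B ∧
    ∀ f1 : Strat V, Legal1 G f1 (1 - B) → 0 < mpval w tb f1 f2 v0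

/-- `t` is a threshold budget at `v` in the mean-payoff game. -/
def IsThreshMP {V : Type} [Fintype V] (G : BiddingGame V) (w : V → ℤ) (v : V)
    (t : ℝ) : Prop :=
  (∀ B : ℝ, B ≤ 1 → t < B → MinWinsFrom G w v B) ∧
  (∀ B : ℝ, B ≤ 1 → 1 - t < B → MaxWinsFrom G w v B)

/-! ### The split graph `G^u` and the weighted Richman function -/

/-- Edges of `G^u`: `u` is split into `u_s = Sum.inl u` (keeping the outgoing edges of
`u`, with no incoming edges) and `u_t = Sum.inr ()` (receiving the edges into `u`, with
no outgoing edges). -/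
def splitE {V : Type} [Fintype V] (G : BiddingGame V) (u : V) :
    V ⊕ Unit → V ⊕ Unit → Prop
  | Sum.inl v, Sum.inl x => G.E v x ∧ x ≠ u
  | Sum.inl v, Sum.inr _ => G.E v u
  | Sum.inr _, _ => False

/-- The successors in `G^u` of a vertex `v ∈ V` (i.e. of `Sum.inl v`). -/
noncomputable def succu {V : Type} [Fintype V] (G : BiddingGame V) (u v : V) :
    Finset (V ⊕ Unit) :=
  Finset.univ.filter (fun y => splitE G u (Sum.inl v) y)

lemma succu_nonempty {V : Type} [Fintype V] (G : BiddingGame V) (u v : V) :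
    (succu G u v).Nonempty := by
  obtain ⟨x, hx⟩ := G.total v
  by_cases hxu : x = u
  · refine ⟨Sum.inr (), ?_⟩
    simp only [succu, Finset.mem_filter, Finset.mem_univ, true_and]
    exact show G.E v u from hxu ▸ hx
  · refine ⟨Sum.inl x, ?_⟩
    simp only [succu, Finset.mem_filter, Finset.mem_univ, true_and]
    exact show G.E v x ∧ x ≠ u from ⟨hx, hxu⟩

/-- `W(v⁺)`: the maximal value of `W` over the `G^u`-successors of `v`. -/
noncomputable def supWu {V : Type} [Fintype V] (G : BiddingGame V) (u : V)
    (W : V ⊕ Unit → ℝ) (v : V) : ℝ :=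
  (succu G u v).sup' (succu_nonempty G u v) W

/-- `W(v⁻)`: the minimal value of `W` over the `G^u`-successors of `v`. -/
noncomputable def infWu {V : Type} [Fintype V] (G : BiddingGame V) (u : V)
    (W : V ⊕ Unit → ℝ) (v : V) : ℝ :=
  (succu G u v).inf' (succu_nonempty G u v) W

/-- `W` is a weighted Richman function for the weights `w`, split at `u`:
`W(u_t) = 0` and `W(v) = (W(v⁺) + W(v⁻))/2 + w(v)` for every `v ∈ V`
(`Sum.inl v` represents `v`, in particular `Sum.inl u` is `u_s`). -/
def IsWRichman {V : Type} [Fintype V] (G : BiddingGame V) (w : V → ℝ) (u : V)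
    (W : V ⊕ Unit → ℝ) : Prop :=
  W (Sum.inr ()) = 0 ∧
  ∀ v : V, W (Sum.inl v) = (supWu G u W v + infWu G u W v) / 2 + w v

/-- Projection of `G^u`-vertices back to vertices of `G`. -/
def projU {V : Type} (u : V) : V ⊕ Unit → V := Sum.elim id (fun _ => u)

/-- `w_M`: the maximal absolute value of `W` over `V`. -/
noncomputable def wMax {V : Type} [Fintype V] (W : V ⊕ Unit → ℝ) (u : V) : ℝ :=
  Finset.univ.sup' ⟨u, Finset.mem_univ u⟩ (fun v : V => |W (Sum.inl v)|)

/-- `b_M`: the maximal value of the bid `(W(v⁺) − W(v⁻))/2` over `V`. -/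
noncomputable def bMax {V : Type} [Fintype V] (G : BiddingGame V) (u : V)
    (W : V ⊕ Unit → ℝ) : ℝ :=
  Finset.univ.sup' ⟨u, Finset.mem_univ u⟩
    (fun v : V => (supWu G u W v - infWu G u W v) / 2)

/-! Player 1 fixes positive weights `a` (powers of `1/3` of a rank towards `vR`, scaled to at most
`B / 2`) that at least triple along a chosen edge towards `vR`; he bids the weight of the current
vertex whenever he can afford it and moves along that edge. Before `vR` is reached, the potential
`pay1 - a cur` drops by at least `min a` in every round: a won bidding costs `a v` but lands on a
vertex of weight `≥ 3 a v`, and a lost one brings in at least `a v`. Hence `pay1 < a cur ≤ B / 2`,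
so the bid is indeed affordable, and since a legal opponent keeps the potential bounded below,
`vR` is reached. As `vS` is unreachable, it is never visited. -/

open Relation

section Reachability

variable {V : Type}

def ReachesWithin (E : V → V → Prop) (t : V) : ℕ → V → Prop
  | 0, v => v = t
  | n + 1, v => v = t ∨ ∃ u, E v u ∧ ReachesWithin E t n u

lemma exists_reachesWithin {E : V → V → Prop} {t v : V} (h : ReflTransGen E v t) :
    ∃ n, ReachesWithin E t n v := by
  induction h using ReflTransGen.head_induction_on with
  | refl => exact ⟨0, rfl⟩
  | head hE _ ih =>
    obtain ⟨n, hn⟩ := ih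
    exact ⟨n + 1, Or.inr ⟨_, hE, hn⟩⟩

lemma exists_rank_of_reflTransGen {E : V → V → Prop} {t : V} (h : ∀ v, ReflTransGen E v t) :
    ∃ r : V → ℕ, ∀ v, v ≠ t → ∃ u, E v u ∧ r u < r v := by
  refine ⟨fun v => Nat.find (exists_reachesWithin (h v)), fun v hv => ?_⟩
  have hspec := Nat.find_spec (exists_reachesWithin (h v))
  beta_reduce
  cases hN : Nat.find (exists_reachesWithin (h v)) with
  | zero => rw [hN] at hspec; exact absurd hspec hv
  | succ m =>
    rw [hN] at hspec
    obtain ⟨u, hvu, hu⟩ := hspec.resolve_left hv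
    exact ⟨u, hvu, Nat.lt_succ_of_le (Nat.find_min' _ hu)⟩

lemma exists_tripling_weights [Fintype V] (G : BiddingGame V) {vR : V}
    (hreach : ∀ v, ReflTransGen G.E v vR) {B : ℝ} (hB : 0 < B) :
    ∃ (a : V → ℝ) (move : V → V) (ε : ℝ), 0 < ε ∧ (∀ v, G.E v (move v)) ∧
      (∀ v, v ≠ vR → 3 * a v ≤ a (move v)) ∧ ∀ v, ε ≤ a v ∧ 2 * a v ≤ B := by
  obtain ⟨r, hr⟩ := exists_rank_of_reflTransGen hreach
  have hstep : ∀ v, ∃ u, G.E v u ∧ (v ≠ vR → r u < r v) := fun v => by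
    by_cases hv : v = vR
    · exact (G.total v).imp fun u hu => ⟨hu, fun h => absurd hv h⟩
    · exact (hr v hv).imp fun u hu => ⟨hu.1, fun _ => hu.2⟩
  choose move hmove hlt using hstep
  have h3 : (3⁻¹ : ℝ) ≤ 1 := by norm_num
  refine ⟨fun v => B / 2 * 3⁻¹ ^ r v, move, B / 2 * 3⁻¹ ^ Finset.univ.sup r, by positivity,
    hmove, fun v hv => ?_, fun v => ⟨?_, ?_⟩⟩
  · have : (3⁻¹ : ℝ) ^ r v ≤ 3⁻¹ ^ (r (move v) + 1) :=
      pow_le_pow_of_le_one (by norm_num) h3 (hlt v hv)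
    rw [pow_succ] at this
    nlinarith
  · exact mul_le_mul_of_nonneg_left
      (pow_le_pow_of_le_one (by norm_num) h3 (Finset.le_sup (Finset.mem_univ v))) (by positivity)
  · nlinarith [pow_le_one₀ (by norm_num) h3 (n := r v)]

end Reachability

section Play

variable {V : Type}

@[simp]
lemma Hist.cur_append_singleton (h : Hist V) (r : BidRound V) :
    (⟨h.init, h.rounds ++ [r]⟩ : Hist V).cur = r.dest := by
  simp [Hist.cur]

@[simp]
lemma Hist.pay1_append_singleton (h : Hist V) (r : BidRound V) :
    (⟨h.init, h.rounds ++ [r]⟩ : Hist V).pay1 = h.pay1 + if r.p1Won then r.bid else -r.bid := by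
  simp [Hist.pay1]

lemma extend_cases (tb : TieBreak V) (f1 f2 : Strat V) (h : Hist V) :
    ((extend tb f1 f2 h).cur = (f1 h).2 ∧ (extend tb f1 f2 h).pay1 = h.pay1 + (f1 h).1) ∨
      ((extend tb f1 f2 h).cur = (f2 h).2 ∧ (extend tb f1 f2 h).pay1 = h.pay1 - (f2 h).1 ∧
        (f1 h).1 ≤ (f2 h).1) := by
  unfold extend
  split_ifs with hwin
  · simp
  · push Not at hwin
    simp [hwin.1, sub_eq_add_neg]

lemma play_succ (tb : TieBreak V) (f1 f2 : Strat V) (v0 : V) (n : ℕ) :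
    play tb f1 f2 v0 (n + 1) = extend tb f1 f2 (play tb f1 f2 v0 n) :=
  rfl

@[simp]
lemma pay1_play_zero (tb : TieBreak V) (f1 f2 : Strat V) (v0 : V) :
    (play tb f1 f2 v0 0).pay1 = 0 := by
  simp [play, Hist.pay1]

lemma reflTransGen_visit [Fintype V] {G : BiddingGame V} {f1 f2 : Strat V} {B₁ B₂ : ℝ}
    (h1 : Legal1 G f1 B₁) (h2 : Legal2 G f2 B₂) (tb : TieBreak V) (v0 : V) (n : ℕ) :
    ReflTransGen G.E v0 (visit tb f1 f2 v0 n) := by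
  induction n with
  | zero => exact .refl
  | succ n ih =>
    refine ih.tail ?_
    change G.E _ (extend tb f1 f2 (play tb f1 f2 v0 n)).cur
    rcases extend_cases tb f1 f2 (play tb f1 f2 v0 n) with ⟨hcur, -⟩ | ⟨hcur, -⟩
    · exact hcur ▸ (h1 tb f2 v0 n).2.2
    · exact hcur ▸ (h2 tb f1 v0 n).2.2

lemma neg_le_pay1_of_legal2 [Fintype V] {G : BiddingGame V} {f2 : Strat V} {B₂ : ℝ}
    (h2 : Legal2 G f2 B₂) (tb : TieBreak V) (f1 : Strat V) (v0 : V) (n : ℕ) :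
    -B₂ ≤ (play tb f1 f2 v0 n).pay1 := by
  obtain ⟨hbid, hbudget, -⟩ := h2 tb f1 v0 n
  rw [Hist.pay2] at hbudget
  linarith

end Play

section WeightStrat

variable {V : Type} (a : V → ℝ) (move : V → V) (B : ℝ)

noncomputable def weightStrat : Strat V :=
  fun h => (if h.pay1 + a h.cur ≤ B then a h.cur else 0, move h.cur)

variable {a move B}

lemma weightStrat_bid_nonneg (ha : ∀ v, 0 ≤ a v) (h : Hist V) :
    0 ≤ (weightStrat a move B h).1 := by
  unfold weightStrat
  split_ifs
  exacts [ha _, le_rfl]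

lemma pay1_play_weightStrat_le (ha : ∀ v, 0 ≤ a v) (hB : 0 ≤ B) (tb : TieBreak V)
    (f2 : Strat V) (v0 : V) (n : ℕ) : (play tb (weightStrat a move B) f2 v0 n).pay1 ≤ B := by
  induction n with
  | zero => simpa using hB
  | succ n ih =>
    rw [play_succ]
    rcases extend_cases tb (weightStrat a move B) f2 (play tb (weightStrat a move B) f2 v0 n)
      with ⟨-, hpay⟩ | ⟨-, hpay, hle⟩
    · rw [hpay, weightStrat]
      split_ifs <;> linarith
    · linarith [weightStrat_bid_nonneg (move := move) (B := B) ha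
        (play tb (weightStrat a move B) f2 v0 n)]

lemma legal1_weightStrat [Fintype V] {G : BiddingGame V} (ha : ∀ v, 0 ≤ a v) (hB : 0 ≤ B)
    (hmove : ∀ v, G.E v (move v)) : Legal1 G (weightStrat a move B) B := by
  intro tb f2 v0 n
  have hpay := pay1_play_weightStrat_le (move := move) ha hB tb f2 v0 n
  refine ⟨weightStrat_bid_nonneg ha _, ?_, hmove _⟩
  rw [weightStrat]
  split_ifs <;> linarith

variable {vR : V} {ε : ℝ}

lemma pay1_sub_weight_add_le (htriple : ∀ v, v ≠ vR → 3 * a v ≤ a (move v))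
    (hε : 0 ≤ ε) (ha : ∀ v, ε ≤ a v ∧ 2 * a v ≤ B) (tb : TieBreak V) (f2 : Strat V)
    (v0 : V) (n : ℕ) (hnR : ∀ m < n, visit tb (weightStrat a move B) f2 v0 m ≠ vR) :
    (play tb (weightStrat a move B) f2 v0 n).pay1 - a (visit tb (weightStrat a move B) f2 v0 n)
      + n * ε ≤ -a v0 := by
  induction n with
  | zero => simp [visit, play, Hist.cur, Hist.pay1]
  | succ n ih =>
    set h := play tb (weightStrat a move B) f2 v0 n
    have ih : h.pay1 - a h.cur + n * ε ≤ -a v0 := ih fun m hm => hnR m (by omega)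
    have hcur : h.cur ≠ vR := hnR n (by omega)
    have hnε : 0 ≤ (n : ℝ) * ε := by positivity
    obtain ⟨hεc, hcB⟩ := ha h.cur
    have hbid : (weightStrat a move B h).1 = a h.cur :=
      if_pos (by linarith [(ha v0).1])
    have hmv : (weightStrat a move B h).2 = move h.cur := rfl
    change (extend tb _ f2 h).pay1 - a (extend tb _ f2 h).cur + (n + 1 : ℕ) * ε ≤ -a v0
    push_cast
    rcases extend_cases tb (weightStrat a move B) f2 h with ⟨hc, hpay⟩ | ⟨hc, hpay, hle⟩
    · rw [hc, hpay, hbid, hmv]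
      linarith [htriple _ hcur]
    · rw [hc, hpay]
      linarith [(ha (f2 h).2).1]

lemma exists_visit_eq_and_pay1_lt [Fintype V] {G : BiddingGame V}
    (htriple : ∀ v, v ≠ vR → 3 * a v ≤ a (move v)) (hε : 0 < ε) (ha : ∀ v, ε ≤ a v ∧ 2 * a v ≤ B)
    (tb : TieBreak V) {f2 : Strat V} (hf2 : Legal2 G f2 (1 - B)) (v0 : V) :
    ∃ n, visit tb (weightStrat a move B) f2 v0 n = vR ∧
      0 < B - (play tb (weightStrat a move B) f2 v0 n).pay1 := by
  have hdesc := pay1_sub_weight_add_le htriple hε.le ha tb f2 v0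
  have hv0 := (ha v0).1
  have hex : ∃ n, visit tb (weightStrat a move B) f2 v0 n = vR := by
    by_contra! hne
    obtain ⟨n, hn⟩ := exists_nat_gt (1 / ε)
    rw [div_lt_iff₀ hε] at hn
    have hpot := hdesc n fun m _ => hne m
    have hpay := neg_le_pay1_of_legal2 hf2 tb (weightStrat a move B) v0 n
    have hcur := ha (visit tb (weightStrat a move B) f2 v0 n)
    linarith
  refine ⟨Nat.find hex, Nat.find_spec hex, ?_⟩
  have hpot := hdesc _ fun m hm => Nat.find_min hex hm
  rw [Nat.find_spec hex] at hpot
  have hnε : 0 ≤ (Nat.find hex : ℝ) * ε := by positivity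
  linarith [ha vR]

end WeightStrat

theorem richman_only_reachable_target_wins_general
    {V : Type} [Fintype V] (G : BiddingGame V) (vR vS : V)
    (hreach : ∀ v : V, Relation.ReflTransGen G.E v vR)
    (hunreach : ∀ v : V, Relation.ReflTransGen G.E v vS → v = vS)
    (v : V) (hv : v ≠ vS) (B : ℝ) (hB0 : 0 < B) (tb : TieBreak V) :
    ∃ f1 : Strat V, Legal1 G f1 B ∧
      ∀ f2 : Strat V, Legal2 G f2 (1 - B) →
        ∃ n, visit tb f1 f2 v n = vR ∧ (∀ m < n, visit tb f1 f2 v m ≠ vS) ∧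
          0 < B - (play tb f1 f2 v n).pay1 := by
  obtain ⟨a, move, ε, hε, hmove, htriple, ha⟩ := exists_tripling_weights G hreach hB0
  have hlegal := legal1_weightStrat (fun u => hε.le.trans (ha u).1) hB0.le hmove
  refine ⟨weightStrat a move B, hlegal, fun f2 hf2 => ?_⟩
  obtain ⟨n, hn, hpos⟩ := exists_visit_eq_and_pay1_lt htriple hε ha tb hf2 v
  exact ⟨n, hn, fun m _ hm => hv (hunreach v (hm ▸ reflTransGen_visit hlegal hf2 tb v m)), hpos⟩

/-- In a Richman game in which `vR` is reachable from every vertex and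
no vertex (other than `vS` itself) has a path to `vS`, the threshold budget of every
vertex is `0`: from every vertex and with every strictly positive initial budget,
Player 1 can force the outcome to reach `vR`, and moreover to reach it while still
holding a strictly positive budget. -/
theorem richman_only_reachable_target_wins
    {V : Type} [Fintype V] (G : BiddingGame V) (vR vS : V) (hRS : vR ≠ vS)
    (hreach : ∀ v : V, Relation.ReflTransGen G.E v vR)
    (hunreach : ∀ v : V, Relation.ReflTransGen G.E v vS → v = vS)
    (v : V) (hv : v ≠ vS) (B : ℝ) (hB0 : 0 < B) (hB1 : B ≤ 1) (tb : TieBreak V) :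
    ∃ f1 : Strat V, Legal1 G f1 B ∧
      ∀ f2 : Strat V, Legal2 G f2 (1 - B) →
        ∃ n, visit tb f1 f2 v n = vR ∧ (∀ m < n, visit tb f1 f2 v m ≠ vS) ∧
          0 < B - (play tb f1 f2 v n).pay1 :=
  richman_only_reachable_target_wins_general G vR vS hreach hunreach v hv B hB0 tb
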